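/- arXiv:1108.5834 — 5 statements merged into one kernel-verified Lean document; each statement's English description precedes it below -/
import Mathlib

section
/- Let U ⊆ ℂ be open, let λ : U → ℝ be smooth with λ > 0 on U, let f : U → ℝ be smooth, and let P, Q : ℝ → ℝ be smooth functions such that Δf(z) = λ(z)²·P(f(z)) and |∇f(z)|² = λ(z)²·Q(f(z)) for all z ∈ U. Define K : U → ℝ by K = −λ⁻²·Δ(log λ) (the Gaussian curvature of the conformal metric λ²(dx²+dy²)). Then at every point z ∈ U where ∇f(z) ≠ 0, one has 2·K(z)·Q(f(z)) + (2P(f(z)) − Q′(f(z)))·(P(f(z)) − Q′(f(z))) + Q(f(z))·(2P′(f(z)) − Q″(f(z))) = 0. -/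
/-- `∂u/∂x` of `u : ℂ → ℝ` at `z`, identifying `ℂ` with `ℝ²`. -/
noncomputable def pdxR (u : ℂ → ℝ) (z : ℂ) : ℝ := fderiv ℝ u z 1

/-- `∂u/∂y` of `u : ℂ → ℝ` at `z`. -/
noncomputable def pdyR (u : ℂ → ℝ) (z : ℂ) : ℝ := fderiv ℝ u z Complex.I

/-- Euclidean Laplacian `Δu = ∂²u/∂x² + ∂²u/∂y²` of `u : ℂ → ℝ`. -/
noncomputable def lapR (u : ℂ → ℝ) (z : ℂ) : ℝ :=
  pdxR (fun w => pdxR u w) z + pdyR (fun w => pdyR u w) z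

/-- `|∇u|² = (∂u/∂x)² + (∂u/∂y)²`. -/
noncomputable def gradSq (u : ℂ → ℝ) (z : ℂ) : ℝ := (pdxR u z) ^ 2 + (pdyR u z) ^ 2

open Complex Filter

noncomputable def pdv (v : ℂ) (u : ℂ → ℝ) (z : ℂ) : ℝ := fderiv ℝ u z v


lemma pdv_congr {u w : ℂ → ℝ} {z : ℂ} (v : ℂ) (h : u =ᶠ[nhds z] w) :
    pdv v u z = pdv v w z := by
  unfold pdv; rw [h.fderiv_eq]

lemma pdv_const (v : ℂ) (z : ℂ) (r : ℝ) : pdv v (fun _ => r) z = 0 := by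
  simp [pdv]

lemma contDiffOn_pdv {U : Set ℂ} (hU : IsOpen U) {u : ℂ → ℝ}
    (hu : ContDiffOn ℝ (⊤ : ℕ∞) u U) (v : ℂ) : ContDiffOn ℝ (⊤ : ℕ∞) (pdv v u) U := by
  have h1 : ContDiffOn ℝ (⊤ : ℕ∞) (fderiv ℝ u) U := hu.fderiv_of_isOpen hU (by exact_mod_cast (le_top : (⊤:ℕ∞) + 1 ≤ ⊤))
  exact h1.clm_apply contDiffOn_const

lemma pdv_add {u w : ℂ → ℝ} {z : ℂ} (v : ℂ) (hu : DifferentiableAt ℝ u z)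
    (hw : DifferentiableAt ℝ w z) :
    pdv v (fun y => u y + w y) z = pdv v u z + pdv v w z := by
  unfold pdv; rw [fderiv_fun_add hu hw]; rfl

lemma pdv_sub {u w : ℂ → ℝ} {z : ℂ} (v : ℂ) (hu : DifferentiableAt ℝ u z)
    (hw : DifferentiableAt ℝ w z) :
    pdv v (fun y => u y - w y) z = pdv v u z - pdv v w z := by
  unfold pdv; rw [fderiv_fun_sub hu hw]; rfl

lemma pdv_mul {u w : ℂ → ℝ} {z : ℂ} (v : ℂ) (hu : DifferentiableAt ℝ u z)
    (hw : DifferentiableAt ℝ w z) :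
    pdv v (fun y => u y * w y) z = u z * pdv v w z + w z * pdv v u z := by
  unfold pdv; rw [fderiv_fun_mul hu hw]; rfl

lemma pdv_sq {u : ℂ → ℝ} {z : ℂ} (v : ℂ) (hu : DifferentiableAt ℝ u z) :
    pdv v (fun y => u y ^ 2) z = 2 * u z * pdv v u z := by
  have : (fun y => u y ^ 2) = fun y => u y * u y := by ext y; ring
  rw [this, pdv_mul v hu hu]; ring

lemma fderiv_real_apply (φ : ℝ → ℝ) (r t : ℝ) : fderiv ℝ φ r t = t * deriv φ r := by
  have : t = t • (1 : ℝ) := by simp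
  rw [this, (fderiv ℝ φ r).map_smul, fderiv_apply_one_eq_deriv]; simp

lemma pdv_comp {u : ℂ → ℝ} {φ : ℝ → ℝ} {z : ℂ} (v : ℂ)
    (hφ : DifferentiableAt ℝ φ (u z)) (hu : DifferentiableAt ℝ u z) :
    pdv v (fun y => φ (u y)) z = deriv φ (u z) * pdv v u z := by
  unfold pdv
  show fderiv ℝ (φ ∘ u) z v = _
  rw [fderiv_comp z hφ hu]
  simp only [ContinuousLinearMap.coe_comp', Function.comp_apply]
  rw [fderiv_real_apply]; ring

lemma pdv_inv {u : ℂ → ℝ} {z : ℂ} (v : ℂ) (hu : DifferentiableAt ℝ u z)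
    (h0 : u z ≠ 0) :
    pdv v (fun y => (u y)⁻¹) z = -pdv v u z / (u z) ^ 2 := by
  have := pdv_comp (φ := fun t => t⁻¹) v (differentiableAt_inv h0) hu
  rw [this, deriv_inv]; field_simp

lemma pdv_div {u w : ℂ → ℝ} {z : ℂ} (v : ℂ) (hu : DifferentiableAt ℝ u z)
    (hw : DifferentiableAt ℝ w z) (h0 : w z ≠ 0) :
    pdv v (fun y => u y / w y) z
      = (pdv v u z * w z - u z * pdv v w z) / (w z) ^ 2 := by
  have h1 : (fun y => u y / w y) = fun y => u y * (w y)⁻¹ := by ext y; ring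
  rw [h1, pdv_mul (w := fun y => (w y)⁻¹) v hu (hw.inv h0), pdv_inv v hw h0]
  field_simp; ring

lemma pdv_log {u : ℂ → ℝ} {z : ℂ} (v : ℂ) (hu : DifferentiableAt ℝ u z)
    (h0 : 0 < u z) :
    pdv v (fun y => Real.log (u y)) z = pdv v u z / u z := by
  rw [pdv_comp v (Real.differentiableAt_log h0.ne') hu, Real.deriv_log]
  field_simp

/-- Clairaut/Schwarz for nested directional derivatives. -/
lemma pdv_pdv_symm {U : Set ℂ} (hU : IsOpen U) {u : ℂ → ℝ}
    (hu : ContDiffOn ℝ (⊤ : ℕ∞) u U) {z : ℂ} (hz : z ∈ U) (v w : ℂ) :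
    pdv w (pdv v u) z = pdv v (pdv w u) z := by
  have hmem := hU.mem_nhds hz
  have hat : ContDiffAt ℝ (⊤ : ℕ∞) u z := hu.contDiffAt hmem
  have hsymm : IsSymmSndFDerivAt ℝ u z := hat.isSymmSndFDerivAt (by rw [minSmoothness_of_isRCLikeNormedField]; exact WithTop.coe_le_coe.mpr le_top)
  have hdf : DifferentiableAt ℝ (fderiv ℝ u) z := by
    have h : ContDiffOn ℝ (⊤ : ℕ∞) (fderiv ℝ u) U := hu.fderiv_of_isOpen hU (by exact_mod_cast (le_top : (⊤:ℕ∞) + 1 ≤ ⊤))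
    exact (h.contDiffAt hmem).differentiableAt (by simp)
  have key : ∀ e : ℂ, pdv e u = fun y => (ContinuousLinearMap.apply ℝ ℝ e) (fderiv ℝ u y) := by
    intro e; rfl
  have key2 : ∀ e d : ℂ, pdv d (pdv e u) z = fderiv ℝ (fderiv ℝ u) z d e := by
    intro e d
    rw [key e]
    show fderiv ℝ ((ContinuousLinearMap.apply ℝ ℝ e) ∘ (fderiv ℝ u)) z d = _
    rw [fderiv_comp z (ContinuousLinearMap.apply ℝ ℝ e).differentiableAt hdf]
    simp
  rw [key2, key2, hsymm v w]



set_option maxHeartbeats 4000000 in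
/-- If `Δf = λ²·P(f)` and `|∇f|² = λ²·Q(f)` on an open set `U ⊆ ℂ`, then wherever
`∇f ≠ 0` the Gaussian curvature `K = −λ⁻²·Δ log λ` of the metric `λ²(dx²+dy²)` satisfies
`2KQ + (2P−Q′)(P−Q′) + Q(2P′−Q″) = 0` (all evaluated at `f`). -/
theorem curvature_relation_of_hessian_type_equations
    (U : Set ℂ) (hU : IsOpen U)
    (lam : ℂ → ℝ) (hlam : ContDiffOn ℝ (⊤ : ℕ∞) lam U) (hlampos : ∀ z ∈ U, 0 < lam z)
    (f : ℂ → ℝ) (hf : ContDiffOn ℝ (⊤ : ℕ∞) f U)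
    (P Q : ℝ → ℝ) (hP : ContDiff ℝ (⊤ : ℕ∞) P) (hQ : ContDiff ℝ (⊤ : ℕ∞) Q)
    (hlap : ∀ z ∈ U, lapR f z = (lam z) ^ 2 * P (f z))
    (hgrad : ∀ z ∈ U, gradSq f z = (lam z) ^ 2 * Q (f z))
    (K : ℂ → ℝ)
    (hK : ∀ z ∈ U, K z = -((lam z) ^ 2)⁻¹ * lapR (fun w => Real.log (lam w)) z) :
    ∀ z ∈ U, fderiv ℝ f z ≠ 0 →
      2 * K z * Q (f z) + (2 * P (f z) - deriv Q (f z)) * (P (f z) - deriv Q (f z)) +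
        Q (f z) * (2 * deriv P (f z) - deriv (deriv Q) (f z)) = 0 := by
  -- helper: differentiability at points of U
  have dA : ∀ {u : ℂ → ℝ}, ContDiffOn ℝ (⊤ : ℕ∞) u U → ∀ {z : ℂ}, z ∈ U → DifferentiableAt ℝ u z :=
    fun {u} hu {z} hz => (hu.contDiffAt (hU.mem_nhds hz)).differentiableAt (by simp)
  -- smoothness of iterated partials
  have hp : ContDiffOn ℝ (⊤ : ℕ∞) (pdv 1 f) U := contDiffOn_pdv hU hf 1
  have hq : ContDiffOn ℝ (⊤ : ℕ∞) (pdv I f) U := contDiffOn_pdv hU hf I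
  have ha : ContDiffOn ℝ (⊤ : ℕ∞) (pdv 1 (pdv 1 f)) U := contDiffOn_pdv hU hp 1
  have hb : ContDiffOn ℝ (⊤ : ℕ∞) (pdv 1 (pdv I f)) U := contDiffOn_pdv hU hq 1
  have hc : ContDiffOn ℝ (⊤ : ℕ∞) (pdv I (pdv I f)) U := contDiffOn_pdv hU hq I
  -- global differentiability of Q, P and their derivatives
  have hQd : Differentiable ℝ Q := hQ.differentiable (by simp)
  have hPd : Differentiable ℝ P := hP.differentiable (by simp)
  have hQ'c : ContDiff ℝ (⊤ : ℕ∞) (deriv Q) :=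
    (contDiff_infty_iff_deriv.mp (hQ.of_le (by simp))).2
  have hQ'd : Differentiable ℝ (deriv Q) := hQ'c.differentiable (by simp)
  have hP'c : ContDiff ℝ (⊤ : ℕ∞) (deriv P) :=
    (contDiff_infty_iff_deriv.mp (hP.of_le (by simp))).2
  -- Schwarz: mixed partials of f agree on U
  have hba : ∀ z ∈ U, pdv I (pdv 1 f) z = pdv 1 (pdv I f) z :=
    fun z hz => pdv_pdv_symm hU hf hz 1 I
  -- the open set where the gradient does not vanish
  set W : Set ℂ := U ∩ (fun z => pdv 1 f z ^ 2 + pdv I f z ^ 2) ⁻¹' Set.Ioi 0 with hWdef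
  have hNcont : ContinuousOn (fun z => pdv 1 f z ^ 2 + pdv I f z ^ 2) U :=
    ((hp.pow 2).add (hq.pow 2)).continuousOn
  have hWopen : IsOpen W := hNcont.isOpen_inter_preimage hU isOpen_Ioi
  have hWsub : W ⊆ U := Set.inter_subset_left
  -- positivity of Q ∘ f on W
  have hQpos : ∀ z ∈ W, 0 < Q (f z) := by
    intro z hz
    have h1 : pdv 1 f z ^ 2 + pdv I f z ^ 2 = lam z ^ 2 * Q (f z) := hgrad z hz.1
    have h2 : (0:ℝ) < pdv 1 f z ^ 2 + pdv I f z ^ 2 := hz.2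
    nlinarith [hlampos z hz.1, sq_nonneg (lam z)]
  -- differentiated gradient equation, any direction
  have hdgrad : ∀ (v : ℂ), ∀ z ∈ U,
      pdv 1 f z * pdv v (pdv 1 f) z + pdv I f z * pdv v (pdv I f) z
        = lam z * pdv v lam z * Q (f z)
          + lam z ^ 2 * deriv Q (f z) * pdv v f z / 2 := by
    intro v z hz
    have hEq : (fun y => pdv 1 f y ^ 2 + pdv I f y ^ 2)
        =ᶠ[nhds z] (fun y => lam y ^ 2 * Q (f y)) :=
      eventuallyEq_of_mem (hU.mem_nhds hz) (fun y hy => hgrad y hy)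
    have hQfd : DifferentiableAt ℝ (fun y => Q (f y)) z := (hQd (f z)).comp z (dA hf hz)
    have hlam2d : DifferentiableAt ℝ (fun y => lam y ^ 2) z := (dA hlam hz).pow 2
    have h1 := pdv_congr v hEq
    rw [pdv_add v ((dA hp hz).fun_pow 2) ((dA hq hz).fun_pow 2), pdv_sq v (dA hp hz),
        pdv_sq v (dA hq hz),
        pdv_mul v hlam2d hQfd,
        pdv_sq v (dA hlam hz),
        pdv_comp v (hQd (f z)) (dA hf hz)] at h1
    linarith [h1]
  -- gradient of log lam on W, direction 1 and I
  have hgdir : ∀ (v : ℂ), ∀ z ∈ W,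
      pdv v (fun w => Real.log (lam w)) z
        = (pdv 1 f z * pdv v (pdv 1 f) z + pdv I f z * pdv v (pdv I f) z)
            / (pdv 1 f z ^ 2 + pdv I f z ^ 2)
          - deriv Q (f z) * pdv v f z / (2 * Q (f z)) := by
    intro v z hz
    have hzU := hz.1
    have hNQ : pdv 1 f z ^ 2 + pdv I f z ^ 2 = lam z ^ 2 * Q (f z) := hgrad z hzU
    have hlp := hlampos z hzU
    have hQp := hQpos z hz
    have e2 := hdgrad v z hzU
    rw [pdv_log v (dA hlam hzU) hlp, hNQ, e2]
    field_simp
    ring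
  -- trace equation on W
  have htr : ∀ z ∈ W,
      pdv 1 (pdv 1 f) z + pdv I (pdv I f) z
        = (pdv 1 f z ^ 2 + pdv I f z ^ 2) * P (f z) / Q (f z) := by
    intro z hz
    have h1 : pdv 1 (pdv 1 f) z + pdv I (pdv I f) z = lam z ^ 2 * P (f z) := hlap z hz.1
    have hNQ : pdv 1 f z ^ 2 + pdv I f z ^ 2 = lam z ^ 2 * Q (f z) := hgrad z hz.1
    have hQp := hQpos z hz
    rw [h1, hNQ]
    field_simp
  -- now fix the point
  intro z₀ hz₀ hnz
  have hz₀W : z₀ ∈ W := by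
    refine ⟨hz₀, ?_⟩
    simp only [Set.mem_preimage, Set.mem_Ioi]
    rcases lt_or_ge 0 (pdv 1 f z₀ ^ 2 + pdv I f z₀ ^ 2) with h | h
    · exact h
    · exfalso
      have h1 : pdv 1 f z₀ = 0 ∧ pdv I f z₀ = 0 := by
        constructor <;> nlinarith [sq_nonneg (pdv 1 f z₀), sq_nonneg (pdv I f z₀)]
      apply hnz
      ext w
      have hw : w = w.re • (1:ℂ) + w.im • I := by
        simp [Complex.real_smul]
      rw [hw]
      simp only [map_add, map_smul, ContinuousLinearMap.zero_apply]
      have e1 : fderiv ℝ f z₀ 1 = 0 := h1.1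
      have e2 : fderiv ℝ f z₀ I = 0 := h1.2
      rw [e1, e2]
  -- differentiability facts at z₀
  have dp := dA hp hz₀
  have dq := dA hq hz₀
  have da := dA ha hz₀
  have db := dA hb hz₀
  have dc := dA hc hz₀
  have df := dA hf hz₀
  have dQf : DifferentiableAt ℝ (fun y => Q (f y)) z₀ := (hQd (f z₀)).comp z₀ df
  have dQ'f : DifferentiableAt ℝ (fun y => deriv Q (f y)) z₀ := (hQ'd (f z₀)).comp z₀ df
  have dPf : DifferentiableAt ℝ (fun y => P (f y)) z₀ := (hPd (f z₀)).comp z₀ df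
  have dN : DifferentiableAt ℝ (fun y => pdv 1 f y ^ 2 + pdv I f y ^ 2) z₀ :=
    (dp.pow 2).add (dq.pow 2)
  have dS : DifferentiableAt ℝ
      (fun y => pdv 1 f y * pdv 1 (pdv 1 f) y + pdv I f y * pdv 1 (pdv I f) y) z₀ :=
    (dp.mul da).add (dq.mul db)
  have dT : DifferentiableAt ℝ
      (fun y => pdv 1 f y * pdv I (pdv 1 f) y + pdv I f y * pdv I (pdv I f) y) z₀ := by
    refine DifferentiableAt.add (dp.mul ?_) (dq.mul dc)
    exact (dA (contDiffOn_pdv hU hp I) hz₀)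
  have dE1 : DifferentiableAt ℝ (fun y => deriv Q (f y) * pdv 1 f y) z₀ := dQ'f.mul dp
  have dE2 : DifferentiableAt ℝ (fun y => deriv Q (f y) * pdv I f y) z₀ := dQ'f.mul dq
  have d2Q : DifferentiableAt ℝ (fun y => 2 * Q (f y)) z₀ := (differentiableAt_const 2).mul dQf
  have dNP : DifferentiableAt ℝ (fun y => (pdv 1 f y ^ 2 + pdv I f y ^ 2) * P (f y)) z₀ :=
    dN.mul dPf
  have dNPQ : DifferentiableAt ℝ (fun y => (pdv 1 f y ^ 2 + pdv I f y ^ 2) * P (f y) / Q (f y)) z₀ := by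
    have hQ0'' : Q (f z₀) ≠ 0 := (hQpos z₀ hz₀W).ne'
    simpa only [div_eq_mul_inv] using dNP.fun_mul (dQf.fun_inv hQ0'')
  have hN0 : (0:ℝ) < pdv 1 f z₀ ^ 2 + pdv I f z₀ ^ 2 := hz₀W.2
  have hQ0' : (0:ℝ) < Q (f z₀) := hQpos z₀ hz₀W
  have h2Q0' : (2 * Q (f z₀) : ℝ) ≠ 0 := by positivity
  have dG1 : DifferentiableAt ℝ (fun y =>
      (pdv 1 f y * pdv 1 (pdv 1 f) y + pdv I f y * pdv 1 (pdv I f) y)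
        / (pdv 1 f y ^ 2 + pdv I f y ^ 2)) z₀ := by simpa only [div_eq_mul_inv] using dS.fun_mul (dN.fun_inv hN0.ne')
  have dG2 : DifferentiableAt ℝ (fun y =>
      (pdv 1 f y * pdv I (pdv 1 f) y + pdv I f y * pdv I (pdv I f) y)
        / (pdv 1 f y ^ 2 + pdv I f y ^ 2)) z₀ := by simpa only [div_eq_mul_inv] using dT.fun_mul (dN.fun_inv hN0.ne')
  have dF1 : DifferentiableAt ℝ (fun y => deriv Q (f y) * pdv 1 f y / (2 * Q (f y))) z₀ := by simpa only [div_eq_mul_inv] using dE1.fun_mul (d2Q.fun_inv h2Q0')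
  have dF2 : DifferentiableAt ℝ (fun y => deriv Q (f y) * pdv I f y / (2 * Q (f y))) z₀ := by simpa only [div_eq_mul_inv] using dE2.fun_mul (d2Q.fun_inv h2Q0')
  have hQ0 : (0:ℝ) < Q (f z₀) := hQpos z₀ hz₀W
  have h2Q0 : (2 * Q (f z₀) : ℝ) ≠ 0 := by positivity
  -- second derivatives of log lam at z₀ via the formulas on W
  have h2x : pdv 1 (pdv 1 (fun w => Real.log (lam w))) z₀
      = pdv 1 (fun y =>
          (pdv 1 f y * pdv 1 (pdv 1 f) y + pdv I f y * pdv 1 (pdv I f) y)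
            / (pdv 1 f y ^ 2 + pdv I f y ^ 2)
          - deriv Q (f y) * pdv 1 f y / (2 * Q (f y))) z₀ :=
    pdv_congr 1 (eventuallyEq_of_mem (hWopen.mem_nhds hz₀W) (fun y hy => hgdir 1 y hy))
  have h2y : pdv I (pdv I (fun w => Real.log (lam w))) z₀
      = pdv I (fun y =>
          (pdv 1 f y * pdv I (pdv 1 f) y + pdv I f y * pdv I (pdv I f) y)
            / (pdv 1 f y ^ 2 + pdv I f y ^ 2)
          - deriv Q (f y) * pdv I f y / (2 * Q (f y))) z₀ :=
    pdv_congr I (eventuallyEq_of_mem (hWopen.mem_nhds hz₀W) (fun y hy => hgdir I y hy))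
  rw [pdv_sub 1 dG1 dF1,
      pdv_div 1 dS dN hN0.ne', pdv_div 1 dE1 d2Q h2Q0,
      pdv_add 1 (dp.fun_mul da) (dq.fun_mul db), pdv_mul 1 dp da, pdv_mul 1 dq db,
      pdv_add 1 (dp.fun_pow 2) (dq.fun_pow 2), pdv_sq 1 dp, pdv_sq 1 dq,
      pdv_mul 1 dQ'f dp, pdv_comp 1 (hQ'd (f z₀)) df,
      pdv_mul 1 (differentiableAt_const 2) dQf, pdv_const,
      pdv_comp 1 (hQd (f z₀)) df] at h2x
  rw [pdv_sub I dG2 dF2,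
      pdv_div I dT dN hN0.ne', pdv_div I dE2 d2Q h2Q0,
      pdv_add I (dp.fun_mul (dA (contDiffOn_pdv hU hp I) hz₀)) (dq.fun_mul dc),
      pdv_mul I dp (dA (contDiffOn_pdv hU hp I) hz₀), pdv_mul I dq dc,
      pdv_add I (dp.fun_pow 2) (dq.fun_pow 2), pdv_sq I dp, pdv_sq I dq,
      pdv_mul I dQ'f dq, pdv_comp I (hQ'd (f z₀)) df,
      pdv_mul I (differentiableAt_const 2) dQf, pdv_const,
      pdv_comp I (hQd (f z₀)) df] at h2y
  -- symmetry conversions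
  have hsym1 : pdv I (pdv 1 f) z₀ = pdv 1 (pdv I f) z₀ := hba z₀ hz₀
  have hsym2 : pdv I (pdv 1 (pdv I f)) z₀ = pdv 1 (pdv I (pdv I f)) z₀ :=
    pdv_pdv_symm hU hq hz₀ 1 I
  have hsymIp : (pdv I (pdv 1 f)) =ᶠ[nhds z₀] (pdv 1 (pdv I f)) :=
    eventuallyEq_of_mem (hU.mem_nhds hz₀) (fun y hy => hba y hy)
  have hsym3 : pdv I (pdv I (pdv 1 f)) z₀ = pdv 1 (pdv I (pdv I f)) z₀ := by
    rw [pdv_congr I hsymIp]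
    exact pdv_pdv_symm hU hq hz₀ 1 I
  have hsym4 : pdv I (pdv 1 (pdv 1 f)) z₀ = pdv 1 (pdv 1 (pdv I f)) z₀ := by
    rw [pdv_pdv_symm hU hp hz₀ 1 I]
    exact pdv_congr 1 hsymIp
  rw [hsym1, hsym3] at h2y
  -- derivatives of the trace identity
  have htrEq : (fun y => pdv 1 (pdv 1 f) y + pdv I (pdv I f) y)
      =ᶠ[nhds z₀] (fun y => (pdv 1 f y ^ 2 + pdv I f y ^ 2) * P (f y) / Q (f y)) :=
    eventuallyEq_of_mem (hWopen.mem_nhds hz₀W) (fun y hy => htr y hy)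
  have hLx := pdv_congr 1 htrEq
  have hLy := pdv_congr I htrEq
  rw [pdv_add 1 da dc, pdv_div 1 dNP dQf hQ0.ne', pdv_mul 1 dN dPf,
      pdv_comp 1 (hPd (f z₀)) df, pdv_add 1 (dp.fun_pow 2) (dq.fun_pow 2), pdv_sq 1 dp, pdv_sq 1 dq,
      pdv_comp 1 (hQd (f z₀)) df] at hLx
  rw [pdv_add I da dc, pdv_div I dNP dQf hQ0.ne', pdv_mul I dN dPf,
      pdv_comp I (hPd (f z₀)) df, pdv_add I (dp.fun_pow 2) (dq.fun_pow 2), pdv_sq I dp, pdv_sq I dq,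
      pdv_comp I (hQd (f z₀)) df, hsym1, hsym4] at hLy
  have hKz := hK z₀ hz₀
  have hlapg : lapR (fun w => Real.log (lam w)) z₀
      = pdv 1 (pdv 1 (fun w => Real.log (lam w))) z₀
        + pdv I (pdv I (fun w => Real.log (lam w))) z₀ := rfl
  have trace0 := htr z₀ hz₀W
  have hNQ0 : pdv 1 f z₀ ^ 2 + pdv I f z₀ ^ 2 = lam z₀ ^ 2 * Q (f z₀) := hgrad z₀ hz₀
  have hlam2 : lam z₀ ^ 2 = (pdv 1 f z₀ ^ 2 + pdv I f z₀ ^ 2) / Q (f z₀) := by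
    rw [hNQ0]; field_simp
  have hC1 := eq_sub_of_add_eq' hLx
  have hCI := eq_sub_of_add_eq' hLy
  have hc0 := eq_sub_of_add_eq' trace0
  rw [hKz, hlapg, h2x, h2y, hC1, hCI, hc0, hlam2]
  have hQne : Q (f z₀) ≠ 0 := hQ0'.ne'
  have hNne : pdv 1 f z₀ ^ 2 + pdv Complex.I f z₀ ^ 2 ≠ 0 := hN0.ne'
  field_simp
  ring
end

section
/- Let U ⊆ ℂ be open, let F : U → ℝ be smooth with |F(z)| < 1 for all z ∈ U, and let λ : U → ℝ be smooth with λ > 0 on U. If Δ(log(1+F))(z) = λ(z)²·(1 − F(z)) and Δ(log(1−F))(z) = λ(z)²·(1 + F(z)) for all z ∈ U, then U = ∅. -/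
/-- Second directional derivative of `log ∘ G` in terms of those of `G`,
for positive smooth `G` on an open set. -/
lemma pd2_log_aux (U : Set ℂ) (hU : IsOpen U) (G : ℂ → ℝ)
    (hG : ContDiffOn ℝ (⊤ : ℕ∞) G U) (hGpos : ∀ z ∈ U, 0 < G z)
    (v : ℂ) (z : ℂ) (hz : z ∈ U) :
    fderiv ℝ (fun w => fderiv ℝ (fun x => Real.log (G x)) w v) z v
      = -((G z)⁻¹) ^ 2 * (fderiv ℝ G z v) ^ 2
        + (G z)⁻¹ * fderiv ℝ (fun w => fderiv ℝ G w v) z v := by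
  have hGdiff : ∀ w ∈ U, DifferentiableAt ℝ G w := fun w hw =>
    (hG.differentiableOn (by simp)).differentiableAt (hU.mem_nhds hw)
  have hne : ∀ w ∈ U, G w ≠ 0 := fun w hw => ne_of_gt (hGpos w hw)
  have hlog : ∀ w ∈ U, fderiv ℝ (fun x => Real.log (G x)) w = (G w)⁻¹ • fderiv ℝ G w :=
    fun w hw => (((hGdiff w hw).hasFDerivAt).log (hne w hw)).fderiv
  have hev : (fun w => fderiv ℝ (fun x => Real.log (G x)) w v)
      =ᶠ[nhds z] (fun w => (G w)⁻¹ * fderiv ℝ G w v) := by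
    filter_upwards [hU.mem_nhds hz] with w hw
    rw [hlog w hw]; rfl
  rw [hev.fderiv_eq]
  -- differentiability of the derivative of G
  have hD1 : ContDiffOn ℝ 1 (fderiv ℝ G) U :=
    hG.fderiv_of_isOpen hU (WithTop.coe_le_coe.2 le_top)
  have hDdiff : DifferentiableAt ℝ (fun w => fderiv ℝ G w) z :=
    (hD1.differentiableOn one_ne_zero).differentiableAt (hU.mem_nhds hz)
  have hDv : DifferentiableAt ℝ (fun w => fderiv ℝ G w v) z :=
    hDdiff.clm_apply (differentiableAt_const v)
  have hinv : HasFDerivAt (fun w => (G w)⁻¹)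
      ((-(G z ^ 2)⁻¹) • fderiv ℝ G z) z := by
    have h1 : HasDerivAt Inv.inv (-(G z ^ 2)⁻¹) (G z) := hasDerivAt_inv (hne z hz)
    exact h1.comp_hasFDerivAt z (hGdiff z hz).hasFDerivAt
  have hprod := (hinv.fun_mul hDv.hasFDerivAt).fderiv
  rw [hprod]
  simp only [ContinuousLinearMap.add_apply, ContinuousLinearMap.smul_apply, smul_eq_mul]
  ring

set_option maxHeartbeats 1000000 in
/-- On an open set `U ⊆ ℂ`, a smooth `F` with `|F| < 1` cannot satisfy
`Δ log(1+F) = λ²(1−F)` and `Δ log(1−F) = λ²(1+F)` for a smooth positive `λ`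
unless `U = ∅`. -/
theorem no_solution_of_log_laplace_system
    (U : Set ℂ) (hU : IsOpen U)
    (F : ℂ → ℝ) (hF : ContDiffOn ℝ (⊤ : ℕ∞) F U) (hFlt : ∀ z ∈ U, |F z| < 1)
    (lam : ℂ → ℝ) (hlam : ContDiffOn ℝ (⊤ : ℕ∞) lam U) (hlampos : ∀ z ∈ U, 0 < lam z)
    (h₁ : ∀ z ∈ U, lapR (fun w => Real.log (1 + F w)) z = (lam z) ^ 2 * (1 - F z))
    (h₂ : ∀ z ∈ U, lapR (fun w => Real.log (1 - F w)) z = (lam z) ^ 2 * (1 + F z)) :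
    U = ∅ := by
  by_contra hne
  obtain ⟨z, hz⟩ := Set.nonempty_iff_ne_empty.2 hne
  have habs := hFlt z hz
  have ha1 : 0 < 1 + F z := by cases' abs_lt.1 habs with h h; linarith
  have ha2 : 0 < 1 - F z := by cases' abs_lt.1 habs with h h; linarith
  -- smoothness and positivity of 1 ± F
  have hGp : ContDiffOn ℝ (⊤ : ℕ∞) (fun w => 1 + F w) U := contDiffOn_const.add hF
  have hGm : ContDiffOn ℝ (⊤ : ℕ∞) (fun w => 1 - F w) U := contDiffOn_const.sub hF
  have hGppos : ∀ w ∈ U, 0 < 1 + F w := by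
    intro w hw; cases' abs_lt.1 (hFlt w hw) with h h; linarith
  have hGmpos : ∀ w ∈ U, 0 < 1 - F w := by
    intro w hw; cases' abs_lt.1 (hFlt w hw) with h h; linarith
  -- rewrite derivatives of 1 ± F in terms of F (unconditionally)
  have hdp : ∀ (v : ℂ) (w : ℂ), fderiv ℝ (fun x => 1 + F x) w v = fderiv ℝ F w v := by
    intro v w; rw [fderiv_const_add]
  have hdm : ∀ (v : ℂ) (w : ℂ), fderiv ℝ (fun x => 1 - F x) w v = -fderiv ℝ F w v := by
    intro v w; rw [fderiv_const_sub]; rfl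
  have key : ∀ v : ℂ,
      fderiv ℝ (fun w => fderiv ℝ (fun x => Real.log (1 + F x)) w v) z v
        = -((1 + F z)⁻¹) ^ 2 * (fderiv ℝ F z v) ^ 2
          + (1 + F z)⁻¹ * fderiv ℝ (fun w => fderiv ℝ F w v) z v := by
    intro v
    have h0 := pd2_log_aux U hU (fun w => 1 + F w) hGp hGppos v z hz
    simp only [hdp] at h0
    simpa using h0
  have key' : ∀ v : ℂ,
      fderiv ℝ (fun w => fderiv ℝ (fun x => Real.log (1 - F x)) w v) z v
        = -((1 - F z)⁻¹) ^ 2 * (fderiv ℝ F z v) ^ 2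
          - (1 - F z)⁻¹ * fderiv ℝ (fun w => fderiv ℝ F w v) z v := by
    intro v
    have h0 := pd2_log_aux U hU (fun w => 1 - F w) hGm hGmpos v z hz
    simp only [hdm] at h0
    have h2 : fderiv ℝ (fun w => -fderiv ℝ F w v) z v
        = -fderiv ℝ (fun w => fderiv ℝ F w v) z v := by
      rw [fderiv_fun_neg]; simp
    rw [h2] at h0
    rw [h0]; ring
  -- assemble the two Laplacian equations
  set P := fderiv ℝ F z 1 with hP
  set Q := fderiv ℝ F z Complex.I with hQ
  set A := fderiv ℝ (fun w => fderiv ℝ F w 1) z 1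
      + fderiv ℝ (fun w => fderiv ℝ F w Complex.I) z Complex.I with hA
  have e1 := h₁ z hz
  have e2 := h₂ z hz
  simp only [lapR, pdxR, pdyR] at e1 e2
  rw [key 1, key Complex.I] at e1
  rw [key' 1, key' Complex.I] at e2
  have hL : 0 < lam z ^ 2 := pow_pos (hlampos z hz) 2
  have hsq : 0 ≤ P ^ 2 + Q ^ 2 := by positivity
  -- clear denominators and reach a contradiction
  have hne1 : (1 + F z) ≠ 0 := ne_of_gt ha1
  have hne2 : (1 - F z) ≠ 0 := ne_of_gt ha2
  have e1' : A * (1 + F z) - (P ^ 2 + Q ^ 2)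
      = lam z ^ 2 * (1 - F z) * (1 + F z) ^ 2 := by
    field_simp at e1
    nlinarith [e1, sq_nonneg (1 + F z)]
  have e2' : -(A * (1 - F z)) - (P ^ 2 + Q ^ 2)
      = lam z ^ 2 * (1 + F z) * (1 - F z) ^ 2 := by
    field_simp at e2
    nlinarith [e2, sq_nonneg (1 - F z)]
  nlinarith [e1', e2', mul_pos (mul_pos hL ha1) ha2,
    mul_pos (mul_pos (mul_pos hL ha1) ha2) (mul_pos ha1 ha2), sq_nonneg (F z)]
end

section
/- Let U ⊆ ℂ be open, let F : U → ℝ be smooth with |F(z)| < 1 for all z ∈ U, and let λ : U → ℝ be smooth with λ > 0 on U. If Δ(log(1+F))(z) = −2·λ(z)²·F(z) and Δ(log(1−F))(z) = 2·λ(z)²·F(z) for all z ∈ U, then for all z ∈ U one has |∇F(z)|² = 2·λ(z)²·F(z)²·(1 − F(z)²) and ΔF(z) = −2·λ(z)²·F(z)·(1 + F(z)²). -/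
/-- Second directional derivative of `log ∘ u` for positive smooth `u`. -/
lemma pd2_log (U : Set ℂ) (hU : IsOpen U) (u : ℂ → ℝ) (hu : ContDiffOn ℝ (⊤ : ℕ∞) u U)
    (hpos : ∀ z ∈ U, 0 < u z) (v : ℂ) (z : ℂ) (hz : z ∈ U) :
    fderiv ℝ (fun w => fderiv ℝ (fun x => Real.log (u x)) w v) z v
      = fderiv ℝ (fun w => fderiv ℝ u w v) z v / u z
        - (fderiv ℝ u z v) ^ 2 / (u z) ^ 2 := by
  have hdiff : ∀ w ∈ U, DifferentiableAt ℝ u w := fun w hw =>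
    (hu.contDiffAt (hU.mem_nhds hw)).differentiableAt (by simp)
  have hne : ∀ w ∈ U, u w ≠ 0 := fun w hw => (hpos w hw).ne'
  have hstep1 : ∀ w ∈ U, fderiv ℝ (fun x => Real.log (u x)) w = (u w)⁻¹ • fderiv ℝ u w := by
    intro w hw
    exact ((Real.hasDerivAt_log (hne w hw)).comp_hasFDerivAt w
      (hdiff w hw).hasFDerivAt).fderiv
  have hev : (fun w => fderiv ℝ (fun x => Real.log (u x)) w v)
      =ᶠ[nhds z] (fun w => (u w)⁻¹ * fderiv ℝ u w v) := by
    filter_upwards [hU.mem_nhds hz] with w hw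
    rw [hstep1 w hw]; rfl
  rw [show fderiv ℝ (fun w => fderiv ℝ (fun x => Real.log (u x)) w v) z
      = fderiv ℝ (fun w => (u w)⁻¹ * fderiv ℝ u w v) z from hev.fderiv_eq]
  -- differentiability of the pieces
  have hf1 : DifferentiableAt ℝ (fun w => (u w)⁻¹) z := (hdiff z hz).inv (hne z hz)
  have hfd : ContDiffOn ℝ (⊤ : ℕ∞) (fun w => fderiv ℝ u w) U :=
    hu.fderiv_of_isOpen hU (by simp)
  have hf2 : DifferentiableAt ℝ (fun w => fderiv ℝ u w v) z := by
    have : ContDiffOn ℝ (⊤ : ℕ∞) (fun w => fderiv ℝ u w v) U :=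
      hfd.clm_apply contDiffOn_const
    exact (this.contDiffAt (hU.mem_nhds hz)).differentiableAt (by simp)
  rw [fderiv_fun_mul hf1 hf2]
  have hinv : fderiv ℝ (fun w => (u w)⁻¹) z = (-((u z) ^ 2)⁻¹) • fderiv ℝ u z :=
    ((hasDerivAt_inv (hne z hz)).comp_hasFDerivAt z (hdiff z hz).hasFDerivAt).fderiv
  rw [hinv]
  have huz := hne z hz
  simp only [ContinuousLinearMap.add_apply, ContinuousLinearMap.smul_apply, smul_eq_mul]
  field_simp
  ring

lemma lap_log (U : Set ℂ) (hU : IsOpen U) (u : ℂ → ℝ) (hu : ContDiffOn ℝ (⊤ : ℕ∞) u U)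
    (hpos : ∀ z ∈ U, 0 < u z) (z : ℂ) (hz : z ∈ U) :
    lapR (fun w => Real.log (u w)) z = lapR u z / u z - gradSq u z / (u z) ^ 2 := by
  have hx := pd2_log U hU u hu hpos 1 z hz
  have hy := pd2_log U hU u hu hpos Complex.I z hz
  simp only [lapR, gradSq, pdxR, pdyR] at *
  rw [hx, hy]; ring

lemma pd2_const_add (F : ℂ → ℝ) (c : ℝ) (v : ℂ) (z : ℂ) :
    fderiv ℝ (fun w => fderiv ℝ (fun x => c + F x) w v) z v
      = fderiv ℝ (fun w => fderiv ℝ F w v) z v := by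
  have : (fun w => fderiv ℝ (fun x => c + F x) w v) = fun w => fderiv ℝ F w v := by
    funext w; rw [fderiv_const_add]
  rw [this]

lemma pd2_const_sub (F : ℂ → ℝ) (c : ℝ) (v : ℂ) (z : ℂ) :
    fderiv ℝ (fun w => fderiv ℝ (fun x => c - F x) w v) z v
      = - fderiv ℝ (fun w => fderiv ℝ F w v) z v := by
  have h : (fun w => fderiv ℝ (fun x => c - F x) w v) = fun w => -(fderiv ℝ F w v) := by
    funext w; rw [fderiv_const_sub]; rfl
  rw [h]
  have h2 : fderiv ℝ (fun w => -(fderiv ℝ F w v)) z = -fderiv ℝ (fun w => fderiv ℝ F w v) z :=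
    fderiv_neg
  rw [h2]; rfl

lemma lap_const_add (F : ℂ → ℝ) (c : ℝ) (z : ℂ) :
    lapR (fun w => c + F w) z = lapR F z := by
  simp only [lapR, pdxR, pdyR]
  rw [pd2_const_add F c 1 z, pd2_const_add F c Complex.I z]

lemma lap_const_sub (F : ℂ → ℝ) (c : ℝ) (z : ℂ) :
    lapR (fun w => c - F w) z = - lapR F z := by
  simp only [lapR, pdxR, pdyR]
  rw [pd2_const_sub F c 1 z, pd2_const_sub F c Complex.I z]; ring

lemma gradSq_const_add (F : ℂ → ℝ) (c : ℝ) (z : ℂ) :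
    gradSq (fun w => c + F w) z = gradSq F z := by
  simp only [gradSq, pdxR, pdyR, fderiv_const_add]

lemma gradSq_const_sub (F : ℂ → ℝ) (c : ℝ) (z : ℂ) :
    gradSq (fun w => c - F w) z = gradSq F z := by
  simp only [gradSq, pdxR, pdyR, fderiv_const_sub]
  simp [neg_pow]

/-- If a smooth `F` with `|F| < 1` satisfies `Δ log(1+F) = −2λ²F` and
`Δ log(1−F) = 2λ²F` on an open set `U ⊆ ℂ` with `λ` smooth positive, then
`|∇F|² = 2λ²F²(1−F²)` and `ΔF = −2λ²F(1+F²)` on `U`. -/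
theorem grad_and_laplace_identities_of_log_system
    (U : Set ℂ) (hU : IsOpen U)
    (F : ℂ → ℝ) (hF : ContDiffOn ℝ (⊤ : ℕ∞) F U) (hFlt : ∀ z ∈ U, |F z| < 1)
    (lam : ℂ → ℝ) (hlam : ContDiffOn ℝ (⊤ : ℕ∞) lam U) (hlampos : ∀ z ∈ U, 0 < lam z)
    (h₁ : ∀ z ∈ U, lapR (fun w => Real.log (1 + F w)) z = -2 * (lam z) ^ 2 * F z)
    (h₂ : ∀ z ∈ U, lapR (fun w => Real.log (1 - F w)) z = 2 * (lam z) ^ 2 * F z) :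
    ∀ z ∈ U,
      gradSq F z = 2 * (lam z) ^ 2 * (F z) ^ 2 * (1 - (F z) ^ 2) ∧
      lapR F z = -2 * (lam z) ^ 2 * F z * (1 + (F z) ^ 2) := by
  intro z hz
  have habs := hFlt z hz
  have hp : (0:ℝ) < 1 + F z := by have := abs_lt.1 habs; linarith [this.1]
  have hm : (0:ℝ) < 1 - F z := by have := abs_lt.1 habs; linarith [this.2]
  have hup : ContDiffOn ℝ (⊤ : ℕ∞) (fun w => 1 + F w) U := contDiffOn_const.add hF
  have hum : ContDiffOn ℝ (⊤ : ℕ∞) (fun w => 1 - F w) U := contDiffOn_const.sub hF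
  have hposp : ∀ w ∈ U, 0 < 1 + F w := fun w hw => by
    have := abs_lt.1 (hFlt w hw); linarith [this.1]
  have hposm : ∀ w ∈ U, 0 < 1 - F w := fun w hw => by
    have := abs_lt.1 (hFlt w hw); linarith [this.2]
  have e1 := lap_log U hU (fun w => 1 + F w) hup hposp z hz
  have e2 := lap_log U hU (fun w => 1 - F w) hum hposm z hz
  rw [h₁ z hz, lap_const_add, gradSq_const_add] at e1
  rw [h₂ z hz, lap_const_sub, gradSq_const_sub] at e2
  set A := lapR F z with hA
  set G := gradSq F z with hG
  set f := F z with hf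
  set L := lam z with hL
  have hp' : (1 + f) ≠ 0 := hp.ne'
  have hm' : (1 - f) ≠ 0 := hm.ne'
  have e1' : A * (1 + f) - G = -2 * L ^ 2 * f * (1 + f) ^ 2 := by
    field_simp at e1
    apply mul_left_cancel₀ hp'
    linear_combination -(1 + f) * e1
  have e2' : -A * (1 - f) - G = 2 * L ^ 2 * f * (1 - f) ^ 2 := by
    field_simp at e2
    apply mul_left_cancel₀ hm'
    linear_combination -(1 - f) * e2
  constructor
  · nlinarith [e1', e2']
  · nlinarith [e1', e2']
end

section
/- Let U ⊆ ℂ be open, let F : U → ℝ be smooth with |F(z)| < 1 for all z ∈ U, and let λ : U → ℝ be smooth with λ > 0 on U, satisfying Δ(log(1+F))(z) = −2·λ(z)²·F(z) and Δ(log(1−F))(z) = 2·λ(z)²·F(z) for all z ∈ U. Then at every point z₀ ∈ U with F(z₀) ≠ 0 and ∇F(z₀) ≠ 0, the Gaussian curvature K = −λ⁻²·Δ(log λ) of the conformal metric λ²(dx²+dy²) satisfies K(z₀) = −8. -/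
open Filter Topology
open scoped ContDiff

/-- Directional partial derivative in direction `v`. -/
noncomputable def pdR (v : ℂ) (u : ℂ → ℝ) (z : ℂ) : ℝ := fderiv ℝ u z v

lemma lapR_eq' (u : ℂ → ℝ) (z : ℂ) :
    lapR u z = pdR 1 (pdR 1 u) z + pdR Complex.I (pdR Complex.I u) z := rfl

namespace CurvAux

variable {f g : ℂ → ℝ} {z : ℂ} {c : ℝ}

lemma pdR_congr (h : f =ᶠ[𝓝 z] g) (v : ℂ) : pdR v f z = pdR v g z := by
  unfold pdR; rw [h.fderiv_eq]

lemma pdR_congr_ev (h : f =ᶠ[𝓝 z] g) (v : ℂ) : pdR v f =ᶠ[𝓝 z] pdR v g := by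
  filter_upwards [h.eventuallyEq_nhds] with w hw
  exact pdR_congr hw v

lemma pdR_add (hf : DifferentiableAt ℝ f z) (hg : DifferentiableAt ℝ g z) (v : ℂ) :
    pdR v (fun w => f w + g w) z = pdR v f z + pdR v g z := by
  unfold pdR; rw [fderiv_fun_add hf hg]; rfl

lemma pdR_sub (hf : DifferentiableAt ℝ f z) (hg : DifferentiableAt ℝ g z) (v : ℂ) :
    pdR v (fun w => f w - g w) z = pdR v f z - pdR v g z := by
  unfold pdR; rw [fderiv_fun_sub hf hg]; rfl

lemma pdR_mul (hf : DifferentiableAt ℝ f z) (hg : DifferentiableAt ℝ g z) (v : ℂ) :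
    pdR v (fun w => f w * g w) z = f z * pdR v g z + g z * pdR v f z := by
  unfold pdR; rw [fderiv_fun_mul hf hg]; simp

lemma pdR_const_mul (hf : DifferentiableAt ℝ f z) (c : ℝ) (v : ℂ) :
    pdR v (fun w => c * f w) z = c * pdR v f z := by
  unfold pdR; rw [fderiv_const_mul hf c]; simp

lemma pdR_const_add (c : ℝ) (v : ℂ) : pdR v (fun w => c + f w) z = pdR v f z := by
  unfold pdR; rw [fderiv_const_add]

lemma pdR_const_sub (c : ℝ) (v : ℂ) : pdR v (fun w => c - f w) z = -pdR v f z := by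
  unfold pdR; rw [fderiv_const_sub]; rfl

lemma pdR_neg (v : ℂ) : pdR v (fun w => -(f w)) z = -pdR v f z := by
  unfold pdR; rw [fderiv_fun_neg]; rfl

lemma pdR_const (c : ℝ) (v : ℂ) (z : ℂ) : pdR v (fun _ => c) z = 0 := by
  unfold pdR; simp

lemma pdR_log (hf : DifferentiableAt ℝ f z) (h0 : f z ≠ 0) (v : ℂ) :
    pdR v (fun w => Real.log (f w)) z = (f z)⁻¹ * pdR v f z := by
  have h := (Real.hasDerivAt_log h0).comp_hasFDerivAt z hf.hasFDerivAt
  unfold pdR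
  rw [show (fun w => Real.log (f w)) = Real.log ∘ f from rfl, h.fderiv]
  simp

lemma pdR_inv (hf : DifferentiableAt ℝ f z) (h0 : f z ≠ 0) (v : ℂ) :
    pdR v (fun w => (f w)⁻¹) z = -((f z)^2)⁻¹ * pdR v f z := by
  have h := (hasDerivAt_inv h0).comp_hasFDerivAt z hf.hasFDerivAt
  unfold pdR
  rw [show (fun w => (f w)⁻¹) = (fun y => y⁻¹) ∘ f from rfl, h.fderiv]
  simp

/-- smoothness -/
abbrev SM (f : ℂ → ℝ) (z : ℂ) : Prop := ContDiffAt ℝ ∞ f z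

lemma _root_.ContDiffAt.sdiff (h : SM f z) : DifferentiableAt ℝ f z :=
  h.differentiableAt (by simp)

lemma _root_.ContDiffAt.pd (h : SM f z) (v : ℂ) : SM (pdR v f) z := by
  have h1 : ContDiffAt ℝ ∞ (fderiv ℝ f) z := h.fderiv_right (m := ∞) (by simp)
  exact h1.clm_apply contDiffAt_const

lemma pdR_comm (h : SM f z) (v w : ℂ) :
    pdR v (pdR w f) z = pdR w (pdR v f) z := by
  have hsym := h.isSymmSndFDerivAt (by rw [minSmoothness_of_isRCLikeNormedField]; norm_cast)
  have hd : DifferentiableAt ℝ (fderiv ℝ f) z :=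
    (h.fderiv_right (m := ∞) (by simp)).differentiableAt (by simp)
  have key : ∀ u₁ u₂ : ℂ, pdR u₁ (pdR u₂ f) z = fderiv ℝ (fderiv ℝ f) z u₁ u₂ := by
    intro u₁ u₂
    show fderiv ℝ (fun y => (fderiv ℝ f y) u₂) z u₁ = _
    rw [fderiv_clm_apply hd (differentiableAt_const _)]
    simp
  rw [key, key, hsym v w]

lemma lapR_congr (h : f =ᶠ[𝓝 z] g) : lapR f z = lapR g z := by
  rw [lapR_eq', lapR_eq', pdR_congr (pdR_congr_ev h 1) 1,
    pdR_congr (pdR_congr_ev h Complex.I) Complex.I]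

lemma lapR_add (hf : ∀ᶠ w in 𝓝 z, SM f w) (hg : ∀ᶠ w in 𝓝 z, SM g w) :
    lapR (fun w => f w + g w) z = lapR f z + lapR g z := by
  have key : ∀ v : ℂ, pdR v (fun w => f w + g w) =ᶠ[𝓝 z]
      fun w => pdR v f w + pdR v g w := by
    intro v
    filter_upwards [hf, hg] with w hfw hgw
    exact pdR_add hfw.sdiff hgw.sdiff v
  have hfz := hf.self_of_nhds
  have hgz := hg.self_of_nhds
  rw [lapR_eq', lapR_eq' f, lapR_eq' g, pdR_congr (key 1) 1,
    pdR_congr (key Complex.I) Complex.I,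
    pdR_add ((hfz.pd 1)).sdiff ((hgz.pd 1)).sdiff 1,
    pdR_add ((hfz.pd Complex.I)).sdiff ((hgz.pd Complex.I)).sdiff Complex.I]
  ring

lemma lapR_sub (hf : ∀ᶠ w in 𝓝 z, SM f w) (hg : ∀ᶠ w in 𝓝 z, SM g w) :
    lapR (fun w => f w - g w) z = lapR f z - lapR g z := by
  have key : ∀ v : ℂ, pdR v (fun w => f w - g w) =ᶠ[𝓝 z]
      fun w => pdR v f w - pdR v g w := by
    intro v
    filter_upwards [hf, hg] with w hfw hgw
    exact pdR_sub hfw.sdiff hgw.sdiff v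
  have hfz := hf.self_of_nhds
  have hgz := hg.self_of_nhds
  rw [lapR_eq', lapR_eq' f, lapR_eq' g, pdR_congr (key 1) 1,
    pdR_congr (key Complex.I) Complex.I,
    pdR_sub ((hfz.pd 1)).sdiff ((hgz.pd 1)).sdiff 1,
    pdR_sub ((hfz.pd Complex.I)).sdiff ((hgz.pd Complex.I)).sdiff Complex.I]
  ring

lemma lapR_const (c : ℝ) (z : ℂ) : lapR (fun _ => c) z = 0 := by
  have h : ∀ v : ℂ, pdR v (fun _ : ℂ => c) = fun _ => (0:ℝ) :=
    fun v => funext fun w => pdR_const c v w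
  rw [lapR_eq', h 1, h Complex.I, pdR_const, pdR_const]
  ring

lemma lapR_const_mul (hf : ∀ᶠ w in 𝓝 z, SM f w) (c : ℝ) :
    lapR (fun w => c * f w) z = c * lapR f z := by
  have key : ∀ v : ℂ, pdR v (fun w => c * f w) =ᶠ[𝓝 z]
      fun w => c * pdR v f w := by
    intro v
    filter_upwards [hf] with w hfw
    exact pdR_const_mul hfw.sdiff c v
  have hfz := hf.self_of_nhds
  rw [lapR_eq', lapR_eq' f, pdR_congr (key 1) 1, pdR_congr (key Complex.I) Complex.I,
    pdR_const_mul ((hfz.pd 1)).sdiff c 1,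
    pdR_const_mul ((hfz.pd Complex.I)).sdiff c Complex.I]
  ring

lemma lapR_log (hf : ∀ᶠ w in 𝓝 z, SM f w) (h0 : ∀ᶠ w in 𝓝 z, f w ≠ 0) :
    lapR (fun w => Real.log (f w)) z =
      lapR f z / f z - ((pdR 1 f z)^2 + (pdR Complex.I f z)^2) / (f z)^2 := by
  have hfz := hf.self_of_nhds
  have h0z := h0.self_of_nhds
  have key : ∀ v : ℂ, pdR v (pdR v (fun w => Real.log (f w))) z
      = (f z)⁻¹ * pdR v (pdR v f) z - ((f z)^2)⁻¹ * (pdR v f z)^2 := by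
    intro v
    have e : pdR v (fun w => Real.log (f w)) =ᶠ[𝓝 z]
        fun w => (f w)⁻¹ * pdR v f w := by
      filter_upwards [hf, h0] with w hw h0w
      exact pdR_log hw.sdiff h0w v
    rw [pdR_congr e v,
      pdR_mul (f := fun w => (f w)⁻¹) (hfz.inv h0z).sdiff ((hfz.pd v)).sdiff v, pdR_inv hfz.sdiff h0z v]
    ring
  rw [lapR_eq', lapR_eq' f, key 1, key Complex.I]
  field_simp
  ring

/-- The key algebraic identity. -/
lemma key_alg (f m p q a b cc m1 m2 L Bx By : ℝ)
    (hBpos : 0 < p*p + q*q)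
    (hc1 : p*p + q*q = 2*m*(f^2 - f^4))
    (hc2 : a + cc = -2*m*(f + f^3))
    (hc3 : p*a + q*b = m1*(f^2 - f^4) + m*(2*f - 4*f^3)*p)
    (hc4 : p*b + q*cc = m2*(f^2 - f^4) + m*(2*f - 4*f^3)*q)
    (hL : L = 2*(a^2 + 2*b^2 + cc^2) - 4*p*(m1*(f + f^3) + m*(1 + 3*f^2)*p)
            - 4*q*(m2*(f + f^3) + m*(1 + 3*f^2)*q))
    (hBx : Bx = 2*(p*a + q*b)) (hBy : By = 2*(p*b + q*cc)) :
    L / (p*p + q*q) - (Bx^2 + By^2) / (p*p + q*q)^2 = 8*m := by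
  have hB : p*p + q*q ≠ 0 := ne_of_gt hBpos
  have hB2 : (p*p + q*q)^2 ≠ 0 := pow_ne_zero _ hB
  have main : L*(p*p+q*q) - (Bx^2 + By^2) = 8*m*(p*p+q*q)^2 := by
    subst hL hBx hBy
    linear_combination
      (-12*m*(1+f^2)*(p^2+q^2) - 4*(f+f^3)*(p*m1+q*m2)) * hc1
      + (-2*q^2*cc + 2*q^2*a - 8*p*q*b + 2*p^2*cc - 2*p^2*a
         - 4*f*m*q^2 - 4*f*m*p^2 - 4*f^3*m*q^2 - 4*f^3*m*p^2) * hc2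
      + (8*(f+f^3)*m*p) * hc3
      + (8*(f+f^3)*m*q) * hc4
  have e1 : L / (p*p + q*q) - (Bx^2 + By^2) / (p*p + q*q)^2
      = (L*(p*p+q*q) - (Bx^2 + By^2)) / (p*p + q*q)^2 := by
    field_simp
  rw [e1, main]
  exact mul_div_cancel_right₀ _ hB2

end CurvAux

set_option maxHeartbeats 4000000 in
open CurvAux in
private lemma curvature_aux
    (U : Set ℂ) (hU : IsOpen U)
    (F : ℂ → ℝ) (hF : ContDiffOn ℝ (⊤ : ℕ∞) F U) (hFlt : ∀ z ∈ U, |F z| < 1)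
    (lam : ℂ → ℝ) (hlam : ContDiffOn ℝ (⊤ : ℕ∞) lam U) (hlampos : ∀ z ∈ U, 0 < lam z)
    (h₁ : ∀ z ∈ U, lapR (fun w => Real.log (1 + F w)) z = -2 * (lam z) ^ 2 * F z)
    (h₂ : ∀ z ∈ U, lapR (fun w => Real.log (1 - F w)) z = 2 * (lam z) ^ 2 * F z)
    (K : ℂ → ℝ)
    (hK : ∀ z ∈ U, K z = -((lam z) ^ 2)⁻¹ * lapR (fun w => Real.log (lam w)) z) :
    ∀ z₀ ∈ U, F z₀ ≠ 0 → fderiv ℝ F z₀ ≠ 0 → K z₀ = -8 := by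
  intro z₀ hz₀ hF0 _hgrad
  have sF : ∀ w ∈ U, CurvAux.SM F w := fun w hw =>
    ((hF w hw).contDiffAt (hU.mem_nhds hw)).of_le (by simp)
  have sLam : ∀ w ∈ U, CurvAux.SM lam w := fun w hw =>
    ((hlam w hw).contDiffAt (hU.mem_nhds hw)).of_le (by simp)
  have smu : ∀ w ∈ U, CurvAux.SM (fun y => lam y ^ 2) w := fun w hw => (sLam w hw).pow 2
  have evmem : ∀ w ∈ U, ∀ᶠ y in 𝓝 w, y ∈ U := fun w hw => hU.eventually_mem hw
  have hmupos : ∀ w ∈ U, 0 < lam w ^ 2 := fun w hw => pow_pos (hlampos w hw) 2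
  -- the two basic pointwise identities on U
  have key12 : ∀ w ∈ U,
      (pdR 1 (pdR 1 F) w + pdR Complex.I (pdR Complex.I F) w
          = -2 * lam w ^ 2 * (F w + F w * (F w * F w))) ∧
      (pdR 1 F w * pdR 1 F w + pdR Complex.I F w * pdR Complex.I F w
          = 2 * lam w ^ 2 * (F w * F w - F w * F w * (F w * F w))) := by
    intro w hw
    have h1p : (0:ℝ) < 1 + F w := by have := abs_lt.1 (hFlt w hw); linarith [this.1]
    have h1m : (0:ℝ) < 1 - F w := by have := abs_lt.1 (hFlt w hw); linarith [this.2]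
    have evsm : ∀ᶠ y in 𝓝 w, CurvAux.SM F y := (evmem w hw).mono (fun y hy => sF y hy)
    have ev1p : ∀ᶠ y in 𝓝 w, (1:ℝ) + F y ≠ 0 := (evmem w hw).mono (fun y hy => by
      have := abs_lt.1 (hFlt y hy); intro hc; linarith [this.1])
    have ev1m : ∀ᶠ y in 𝓝 w, (1:ℝ) - F y ≠ 0 := (evmem w hw).mono (fun y hy => by
      have := abs_lt.1 (hFlt y hy); intro hc; linarith [this.2])
    have pd1p : ∀ v : ℂ, pdR v (fun y => (1:ℝ) + F y) = pdR v F :=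
      fun v => funext fun y => CurvAux.pdR_const_add 1 v
    have pd1m : ∀ v : ℂ, pdR v (fun y => (1:ℝ) - F y) = fun y => -pdR v F y :=
      fun v => funext fun y => CurvAux.pdR_const_sub 1 v
    have L1 : lapR (fun y => Real.log (1 + F y)) w
        = lapR (fun y => (1:ℝ) + F y) w / (1 + F w)
          - ((pdR 1 (fun y => (1:ℝ) + F y) w)^2
             + (pdR Complex.I (fun y => (1:ℝ) + F y) w)^2) / (1 + F w)^2 :=
      CurvAux.lapR_log (evsm.mono fun y hy => contDiffAt_const.add hy) ev1p
    have L2 : lapR (fun y => Real.log (1 - F y)) w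
        = lapR (fun y => (1:ℝ) - F y) w / (1 - F w)
          - ((pdR 1 (fun y => (1:ℝ) - F y) w)^2
             + (pdR Complex.I (fun y => (1:ℝ) - F y) w)^2) / (1 - F w)^2 :=
      CurvAux.lapR_log (evsm.mono fun y hy => contDiffAt_const.sub hy) ev1m
    have lap1p : lapR (fun y => (1:ℝ) + F y) w
        = pdR 1 (pdR 1 F) w + pdR Complex.I (pdR Complex.I F) w := by
      rw [lapR_eq', pd1p 1, pd1p Complex.I]
    have lap1m : lapR (fun y => (1:ℝ) - F y) w
        = -(pdR 1 (pdR 1 F) w + pdR Complex.I (pdR Complex.I F) w) := by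
      rw [lapR_eq', pd1m 1, pd1m Complex.I, CurvAux.pdR_neg, CurvAux.pdR_neg]
      ring
    have q1 := h₁ w hw
    have q2 := h₂ w hw
    rw [L1, lap1p, pd1p 1, pd1p Complex.I] at q1
    rw [L2, lap1m, pd1m 1, pd1m Complex.I] at q2
    simp only [neg_sq] at q2
    have hne1 : (1:ℝ) + F w ≠ 0 := ne_of_gt h1p
    have hne2 : (1:ℝ) - F w ≠ 0 := ne_of_gt h1m
    field_simp at q1 q2
    have q1' : (pdR 1 (pdR 1 F) w + pdR Complex.I (pdR Complex.I F) w) * (1 + F w)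
          - (pdR 1 F w * pdR 1 F w + pdR Complex.I F w * pdR Complex.I F w)
        = -2 * lam w ^ 2 * F w * (1 + F w)^2 :=
      mul_left_cancel₀ hne1 (by linear_combination (1 + F w) * q1)
    have q2' : -((pdR 1 (pdR 1 F) w + pdR Complex.I (pdR Complex.I F) w) * (1 - F w))
          - (pdR 1 F w * pdR 1 F w + pdR Complex.I F w * pdR Complex.I F w)
        = 2 * lam w ^ 2 * F w * (1 - F w)^2 :=
      mul_left_cancel₀ hne2 (by linear_combination (1 - F w) * q2)
    have e1 : pdR 1 (pdR 1 F) w + pdR Complex.I (pdR Complex.I F) w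
        = -2 * lam w ^ 2 * (F w + F w * (F w * F w)) := by
      linear_combination (q1' - q2') / 2
    refine ⟨e1, ?_⟩
    linear_combination (-1) * q1' + (1 + F w) * e1
  -- eventual facts at z₀
  have evU : ∀ᶠ w in 𝓝 z₀, w ∈ U := evmem z₀ hz₀
  have evF0 : ∀ᶠ w in 𝓝 z₀, F w ≠ 0 := (sF z₀ hz₀).continuousAt.eventually_ne hF0
  have ev1 : (fun w => pdR 1 (pdR 1 F) w + pdR Complex.I (pdR Complex.I F) w)
      =ᶠ[𝓝 z₀] (fun w => -2 * lam w ^ 2 * (F w + F w * (F w * F w))) :=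
    evU.mono fun w hw => (key12 w hw).1
  have ev2 : (fun w => pdR 1 F w * pdR 1 F w + pdR Complex.I F w * pdR Complex.I F w)
      =ᶠ[𝓝 z₀] (fun w => 2 * lam w ^ 2 * (F w * F w - F w * F w * (F w * F w))) :=
    evU.mono fun w hw => (key12 w hw).2
  -- differentiability bookkeeping
  have dF : ∀ w ∈ U, DifferentiableAt ℝ F w := fun w hw => (sF w hw).sdiff
  have dmu : ∀ w ∈ U, DifferentiableAt ℝ (fun y => lam y ^ 2) w := fun w hw => (smu w hw).sdiff
  have dFF : ∀ w ∈ U, DifferentiableAt ℝ (fun y => F y * F y) w :=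
    fun w hw => (dF w hw).mul (dF w hw)
  have dF3 : ∀ w ∈ U, DifferentiableAt ℝ (fun y => F y * (F y * F y)) w :=
    fun w hw => (dF w hw).mul (dFF w hw)
  have dF4 : ∀ w ∈ U, DifferentiableAt ℝ (fun y => F y * F y * (F y * F y)) w :=
    fun w hw => (dFF w hw).mul (dFF w hw)
  have sP : ∀ w ∈ U, CurvAux.SM (pdR 1 F) w := fun w hw => (sF w hw).pd 1
  have sQ : ∀ w ∈ U, CurvAux.SM (pdR Complex.I F) w := fun w hw => (sF w hw).pd Complex.I
  have dP : ∀ w ∈ U, DifferentiableAt ℝ (pdR 1 F) w := fun w hw => (sP w hw).sdiff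
  have dQ : ∀ w ∈ U, DifferentiableAt ℝ (pdR Complex.I F) w := fun w hw => (sQ w hw).sdiff
  -- derivative of RHS of ev1
  have pdRHS1 : ∀ v : ℂ, pdR v (fun w => -2 * lam w ^ 2 * (F w + F w * (F w * F w))) z₀
      = -2 * pdR v (fun y => lam y ^ 2) z₀ * (F z₀ + F z₀ ^ 3)
        - 2 * lam z₀ ^ 2 * (pdR v F z₀ + 3 * F z₀ ^ 2 * pdR v F z₀) := by
    intro v
    rw [CurvAux.pdR_mul (by exact (contDiffAt_const.mul (smu z₀ hz₀)).sdiff)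
        (by exact ((sF z₀ hz₀).add ((sF z₀ hz₀).mul ((sF z₀ hz₀).mul (sF z₀ hz₀)))).sdiff) v,
      CurvAux.pdR_const_mul (dmu z₀ hz₀) (-2) v,
      CurvAux.pdR_add (dF z₀ hz₀) (dF3 z₀ hz₀) v,
      CurvAux.pdR_mul (dF z₀ hz₀) (dFF z₀ hz₀) v,
      CurvAux.pdR_mul (dF z₀ hz₀) (dF z₀ hz₀) v]
    ring
  -- derivative of RHS of ev2
  have pdRHS2 : ∀ v : ℂ, pdR v (fun w => 2 * lam w ^ 2 * (F w * F w - F w * F w * (F w * F w))) z₀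
      = 2 * pdR v (fun y => lam y ^ 2) z₀ * (F z₀ ^ 2 - F z₀ ^ 4)
        + 2 * lam z₀ ^ 2 * (2 * F z₀ - 4 * F z₀ ^ 3) * pdR v F z₀ := by
    intro v
    rw [CurvAux.pdR_mul (by exact (contDiffAt_const.mul (smu z₀ hz₀)).sdiff)
        (by exact (((sF z₀ hz₀).mul (sF z₀ hz₀)).sub
          (((sF z₀ hz₀).mul (sF z₀ hz₀)).mul ((sF z₀ hz₀).mul (sF z₀ hz₀)))).sdiff) v,
      CurvAux.pdR_const_mul (dmu z₀ hz₀) 2 v,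
      CurvAux.pdR_sub (dFF z₀ hz₀) (dF4 z₀ hz₀) v,
      CurvAux.pdR_mul (dFF z₀ hz₀) (dFF z₀ hz₀) v,
      CurvAux.pdR_mul (dF z₀ hz₀) (dF z₀ hz₀) v]
    ring
  -- first derivatives of Bf
  have evBv : ∀ v : ℂ,
      pdR v (fun y => pdR 1 F y * pdR 1 F y + pdR Complex.I F y * pdR Complex.I F y)
      =ᶠ[𝓝 z₀] fun w =>
        (pdR 1 F w * pdR v (pdR 1 F) w + pdR 1 F w * pdR v (pdR 1 F) w)
        + (pdR Complex.I F w * pdR v (pdR Complex.I F) w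
           + pdR Complex.I F w * pdR v (pdR Complex.I F) w) := by
    intro v
    filter_upwards [evU] with w hw
    rw [CurvAux.pdR_add (f := fun y => pdR 1 F y * pdR 1 F y) (g := fun y => pdR Complex.I F y * pdR Complex.I F y) ((dP w hw).mul (dP w hw)) ((dQ w hw).mul (dQ w hw)) v,
      CurvAux.pdR_mul (dP w hw) (dP w hw) v, CurvAux.pdR_mul (dQ w hw) (dQ w hw) v]
  -- second derivatives of Bf
  have ddBf : ∀ v : ℂ,
      pdR v (pdR v (fun y => pdR 1 F y * pdR 1 F y + pdR Complex.I F y * pdR Complex.I F y)) z₀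
      = 2 * (pdR v (pdR 1 F) z₀* pdR v (pdR 1 F) z₀ + pdR 1 F z₀ * pdR v (pdR v (pdR 1 F)) z₀)
        + 2 * (pdR v (pdR Complex.I F) z₀ * pdR v (pdR Complex.I F) z₀
             + pdR Complex.I F z₀ * pdR v (pdR v (pdR Complex.I F)) z₀) := by
    intro v
    rw [CurvAux.pdR_congr (evBv v) v,
      CurvAux.pdR_add
        (by exact ((dP z₀ hz₀).mul (((sP z₀ hz₀).pd v).sdiff)).add
              ((dP z₀ hz₀).mul (((sP z₀ hz₀).pd v).sdiff)))
        (by exact ((dQ z₀ hz₀).mul (((sQ z₀ hz₀).pd v).sdiff)).add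
              ((dQ z₀ hz₀).mul (((sQ z₀ hz₀).pd v).sdiff))) v,
      CurvAux.pdR_add (f := fun w => pdR 1 F w * pdR v (pdR 1 F) w) (g := fun w => pdR 1 F w * pdR v (pdR 1 F) w) ((dP z₀ hz₀).mul (((sP z₀ hz₀).pd v).sdiff))
        ((dP z₀ hz₀).mul (((sP z₀ hz₀).pd v).sdiff)) v,
      CurvAux.pdR_add (f := fun w => pdR Complex.I F w * pdR v (pdR Complex.I F) w) (g := fun w => pdR Complex.I F w * pdR v (pdR Complex.I F) w) ((dQ z₀ hz₀).mul (((sQ z₀ hz₀).pd v).sdiff))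
        ((dQ z₀ hz₀).mul (((sQ z₀ hz₀).pd v).sdiff)) v,
      CurvAux.pdR_mul (dP z₀ hz₀) (((sP z₀ hz₀).pd v).sdiff) v,
      CurvAux.pdR_mul (dQ z₀ hz₀) (((sQ z₀ hz₀).pd v).sdiff) v]
    ring
  -- Clairaut
  have evQP : pdR 1 (pdR Complex.I F) =ᶠ[𝓝 z₀] pdR Complex.I (pdR 1 F) :=
    evU.mono fun w hw => CurvAux.pdR_comm (sF w hw) 1 Complex.I
  have hbb : pdR 1 (pdR Complex.I F) z₀ = pdR Complex.I (pdR 1 F) z₀ :=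
    CurvAux.pdR_comm (sF z₀ hz₀) 1 Complex.I
  have hA1 : pdR 1 (fun w => pdR 1 (pdR 1 F) w + pdR Complex.I (pdR Complex.I F) w) z₀
      = pdR 1 (pdR 1 (pdR 1 F)) z₀ + pdR Complex.I (pdR Complex.I (pdR 1 F)) z₀ := by
    rw [CurvAux.pdR_add (((sP z₀ hz₀).pd 1).sdiff) (((sQ z₀ hz₀).pd Complex.I).sdiff) 1,
      CurvAux.pdR_comm ((sF z₀ hz₀).pd Complex.I) 1 Complex.I,
      CurvAux.pdR_congr evQP Complex.I]
  have hA2 : pdR Complex.I (fun w => pdR 1 (pdR 1 F) w + pdR Complex.I (pdR Complex.I F) w) z₀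
      = pdR 1 (pdR 1 (pdR Complex.I F)) z₀ + pdR Complex.I (pdR Complex.I (pdR Complex.I F)) z₀ := by
    rw [CurvAux.pdR_add (((sP z₀ hz₀).pd 1).sdiff) (((sQ z₀ hz₀).pd Complex.I).sdiff) Complex.I,
      CurvAux.pdR_comm ((sF z₀ hz₀).pd 1) Complex.I 1,
      CurvAux.pdR_congr evQP.symm 1]
  -- values at z₀
  have hc1' : pdR 1 F z₀ * pdR 1 F z₀ + pdR Complex.I F z₀ * pdR Complex.I F z₀
      = 2 * lam z₀ ^ 2 * (F z₀ * F z₀ - F z₀ * F z₀ * (F z₀ * F z₀)) := ev2.eq_of_nhds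
  have hc2' : pdR 1 (pdR 1 F) z₀ + pdR Complex.I (pdR Complex.I F) z₀
      = -2 * lam z₀ ^ 2 * (F z₀ + F z₀ * (F z₀ * F z₀)) := ev1.eq_of_nhds
  have hDA1 : pdR 1 (fun w => pdR 1 (pdR 1 F) w + pdR Complex.I (pdR Complex.I F) w) z₀
      = -2 * pdR 1 (fun y => lam y ^ 2) z₀ * (F z₀ + F z₀ ^ 3)
        - 2 * lam z₀ ^ 2 * (pdR 1 F z₀ + 3 * F z₀ ^ 2 * pdR 1 F z₀) := by
    rw [CurvAux.pdR_congr ev1 1, pdRHS1 1]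
  have hDA2 : pdR Complex.I (fun w => pdR 1 (pdR 1 F) w + pdR Complex.I (pdR Complex.I F) w) z₀
      = -2 * pdR Complex.I (fun y => lam y ^ 2) z₀ * (F z₀ + F z₀ ^ 3)
        - 2 * lam z₀ ^ 2 * (pdR Complex.I F z₀ + 3 * F z₀ ^ 2 * pdR Complex.I F z₀) := by
    rw [CurvAux.pdR_congr ev1 Complex.I, pdRHS1 Complex.I]
  have hx1 : pdR 1 (fun y => pdR 1 F y * pdR 1 F y + pdR Complex.I F y * pdR Complex.I F y) z₀
      = (pdR 1 F z₀ * pdR 1 (pdR 1 F) z₀ + pdR 1 F z₀ * pdR 1 (pdR 1 F) z₀)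
        + (pdR Complex.I F z₀ * pdR 1 (pdR Complex.I F) z₀
           + pdR Complex.I F z₀ * pdR 1 (pdR Complex.I F) z₀) := (evBv 1).eq_of_nhds
  have hy1 : pdR Complex.I (fun y => pdR 1 F y * pdR 1 F y + pdR Complex.I F y * pdR Complex.I F y) z₀
      = (pdR 1 F z₀ * pdR Complex.I (pdR 1 F) z₀ + pdR 1 F z₀ * pdR Complex.I (pdR 1 F) z₀)
        + (pdR Complex.I F z₀ * pdR Complex.I (pdR Complex.I F) z₀
           + pdR Complex.I F z₀ * pdR Complex.I (pdR Complex.I F) z₀) := (evBv Complex.I).eq_of_nhds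
  have hx2 : pdR 1 (fun y => pdR 1 F y * pdR 1 F y + pdR Complex.I F y * pdR Complex.I F y) z₀
      = 2 * pdR 1 (fun y => lam y ^ 2) z₀ * (F z₀ ^ 2 - F z₀ ^ 4)
        + 2 * lam z₀ ^ 2 * (2 * F z₀ - 4 * F z₀ ^ 3) * pdR 1 F z₀ := by
    rw [CurvAux.pdR_congr ev2 1, pdRHS2 1]
  have hy2 : pdR Complex.I (fun y => pdR 1 F y * pdR 1 F y + pdR Complex.I F y * pdR Complex.I F y) z₀
      = 2 * pdR Complex.I (fun y => lam y ^ 2) z₀ * (F z₀ ^ 2 - F z₀ ^ 4)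
        + 2 * lam z₀ ^ 2 * (2 * F z₀ - 4 * F z₀ ^ 3) * pdR Complex.I F z₀ := by
    rw [CurvAux.pdR_congr ev2 Complex.I, pdRHS2 Complex.I]
  -- positivity of Bf at z₀ and nearby
  have hFlt0 := abs_lt.1 (hFlt z₀ hz₀)
  have hBpos : 0 < pdR 1 F z₀ * pdR 1 F z₀ + pdR Complex.I F z₀ * pdR Complex.I F z₀ := by
    rw [hc1']
    have h0 : 0 < F z₀ * F z₀ := mul_self_pos.2 hF0
    have hsub : 0 < 1 - F z₀ * F z₀ := by nlinarith [hFlt0.1, hFlt0.2]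
    nlinarith [mul_pos (hmupos z₀ hz₀) (mul_pos h0 hsub)]
  have evBne : ∀ᶠ w in 𝓝 z₀,
      pdR 1 F w * pdR 1 F w + pdR Complex.I F w * pdR Complex.I F w ≠ 0 := by
    filter_upwards [evU, evF0] with w hw h0
    have h0' : 0 < F w * F w := mul_self_pos.2 h0
    have habs := abs_lt.1 (hFlt w hw)
    have hsub : 0 < 1 - F w * F w := by nlinarith [habs.1, habs.2]
    have : 0 < 2 * lam w ^ 2 * (F w * F w - F w * F w * (F w * F w)) := by
      nlinarith [mul_pos (hmupos w hw) (mul_pos h0' hsub)]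
    rw [(key12 w hw).2]
    exact ne_of_gt this
  have sBf : ∀ w ∈ U, CurvAux.SM
      (fun y => pdR 1 F y * pdR 1 F y + pdR Complex.I F y * pdR Complex.I F y) w :=
    fun w hw => ((sP w hw).mul (sP w hw)).add ((sQ w hw).mul (sQ w hw))
  -- Laplacian of log Bf
  have lBlog : lapR (fun w => Real.log
        (pdR 1 F w * pdR 1 F w + pdR Complex.I F w * pdR Complex.I F w)) z₀
      = 8 * lam z₀ ^ 2 := by
    have h : lapR (fun w => Real.log
          (pdR 1 F w * pdR 1 F w + pdR Complex.I F w * pdR Complex.I F w)) z₀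
        = lapR (fun y => pdR 1 F y * pdR 1 F y + pdR Complex.I F y * pdR Complex.I F y) z₀
            / (pdR 1 F z₀ * pdR 1 F z₀ + pdR Complex.I F z₀ * pdR Complex.I F z₀)
          - ((pdR 1 (fun y => pdR 1 F y * pdR 1 F y + pdR Complex.I F y * pdR Complex.I F y) z₀)^2
             + (pdR Complex.I (fun y => pdR 1 F y * pdR 1 F y + pdR Complex.I F y * pdR Complex.I F y) z₀)^2)
            / (pdR 1 F z₀ * pdR 1 F z₀ + pdR Complex.I F z₀ * pdR Complex.I F z₀)^2 :=
      CurvAux.lapR_log (evU.mono fun w hw => sBf w hw) evBne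
    rw [h, lapR_eq']
    exact CurvAux.key_alg (F z₀) (lam z₀ ^ 2) (pdR 1 F z₀) (pdR Complex.I F z₀)
      (pdR 1 (pdR 1 F) z₀) (pdR Complex.I (pdR 1 F) z₀) (pdR Complex.I (pdR Complex.I F) z₀)
      (pdR 1 (fun y => lam y ^ 2) z₀) (pdR Complex.I (fun y => lam y ^ 2) z₀) _ _ _
      hBpos
      (by linear_combination hc1')
      (by linear_combination hc2')
      (by linear_combination (hx2 - hx1) / 2 - pdR Complex.I F z₀ * hbb)
      (by linear_combination (hy2 - hy1) / 2)
      (by linear_combination ddBf 1 + ddBf Complex.I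
            + 2 * pdR 1 F z₀ * (hDA1 - hA1) + 2 * pdR Complex.I F z₀ * (hDA2 - hA2)
            + 2 * (pdR 1 (pdR Complex.I F) z₀ + pdR Complex.I (pdR 1 F) z₀) * hbb)
      (by linear_combination hx1 + 2 * pdR Complex.I F z₀ * hbb)
      (by linear_combination hy1)
  -- Laplacian of log (F*F)
  have evFFv : ∀ v : ℂ, pdR v (fun y => F y * F y)
      =ᶠ[𝓝 z₀] fun w => F w * pdR v F w + F w * pdR v F w := by
    intro v
    filter_upwards [evU] with w hw
    rw [CurvAux.pdR_mul (dF w hw) (dF w hw) v]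
  have ddFF : ∀ v : ℂ, pdR v (pdR v (fun y => F y * F y)) z₀
      = 2 * (pdR v F z₀ * pdR v F z₀ + F z₀ * pdR v (pdR v F) z₀) := by
    intro v
    rw [CurvAux.pdR_congr (evFFv v) v,
      CurvAux.pdR_add (f := fun w => F w * pdR v F w) (g := fun w => F w * pdR v F w) ((dF z₀ hz₀).mul (((sF z₀ hz₀).pd v).sdiff))
        ((dF z₀ hz₀).mul (((sF z₀ hz₀).pd v).sdiff)) v,
      CurvAux.pdR_mul (dF z₀ hz₀) (((sF z₀ hz₀).pd v).sdiff) v]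
    ring
  have pdFFval : ∀ v : ℂ, pdR v (fun y => F y * F y) z₀
      = F z₀ * pdR v F z₀ + F z₀ * pdR v F z₀ := fun v => (evFFv v).eq_of_nhds
  have evFFne : ∀ᶠ w in 𝓝 z₀, F w * F w ≠ 0 := evF0.mono fun w h => mul_ne_zero h h
  have lFF : lapR (fun w => Real.log (F w * F w)) z₀ = -8 * lam z₀ ^ 2 := by
    have h : lapR (fun w => Real.log (F w * F w)) z₀
        = lapR (fun y => F y * F y) z₀ / (F z₀ * F z₀)
          - ((pdR 1 (fun y => F y * F y) z₀)^2 + (pdR Complex.I (fun y => F y * F y) z₀)^2)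
            / (F z₀ * F z₀)^2 :=
      CurvAux.lapR_log (evU.mono fun w hw => (sF w hw).mul (sF w hw)) evFFne
    rw [h, lapR_eq', ddFF 1, ddFF Complex.I, pdFFval 1, pdFFval Complex.I]
    have hFF0 : F z₀ * F z₀ ≠ 0 := mul_ne_zero hF0 hF0
    field_simp
    linear_combination (-2) * hc1' + (2 * F z₀) * hc2'
  -- decomposition of log (lam^2)
  have sLogBf : ∀ᶠ w in 𝓝 z₀, CurvAux.SM (fun y => Real.log
      (pdR 1 F y * pdR 1 F y + pdR Complex.I F y * pdR Complex.I F y)) w := by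
    filter_upwards [evU, evBne] with w hw hne
    exact (sBf w hw).log hne
  have sLogFF : ∀ᶠ w in 𝓝 z₀, CurvAux.SM (fun y => Real.log (F y * F y)) w := by
    filter_upwards [evU, evF0] with w hw h0
    exact ((sF w hw).mul (sF w hw)).log (mul_ne_zero h0 h0)
  have sLog1p : ∀ᶠ w in 𝓝 z₀, CurvAux.SM (fun y => Real.log (1 + F y)) w := by
    filter_upwards [evU] with w hw
    have := abs_lt.1 (hFlt w hw)
    exact (contDiffAt_const.add (sF w hw)).log (by intro hc; linarith [this.1])
  have sLog1m : ∀ᶠ w in 𝓝 z₀, CurvAux.SM (fun y => Real.log (1 - F y)) w := by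
    filter_upwards [evU] with w hw
    have := abs_lt.1 (hFlt w hw)
    exact (contDiffAt_const.sub (sF w hw)).log (by intro hc; linarith [this.2])
  have evdec : (fun w => Real.log (lam w ^ 2)) =ᶠ[𝓝 z₀] fun w =>
      Real.log (pdR 1 F w * pdR 1 F w + pdR Complex.I F w * pdR Complex.I F w)
      - Real.log 2 - Real.log (F w * F w) - Real.log (1 + F w) - Real.log (1 - F w) := by
    filter_upwards [evU, evF0] with w hw h0
    have habs := abs_lt.1 (hFlt w hw)
    have h1p : (0:ℝ) < 1 + F w := by linarith [habs.1]
    have h1m : (0:ℝ) < 1 - F w := by linarith [habs.2]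
    have hmune : lam w ^ 2 ≠ 0 := ne_of_gt (hmupos w hw)
    have hFFne : F w * F w ≠ 0 := mul_ne_zero h0 h0
    have h1pne : (1:ℝ) + F w ≠ 0 := ne_of_gt h1p
    have h1mne : (1:ℝ) - F w ≠ 0 := ne_of_gt h1m
    have hprod : ((1:ℝ) + F w) * (1 - F w) ≠ 0 := mul_ne_zero h1pne h1mne
    have hBfw : pdR 1 F w * pdR 1 F w + pdR Complex.I F w * pdR Complex.I F w
        = lam w ^ 2 * (2 * ((F w * F w) * ((1 + F w) * (1 - F w)))) := by
      linear_combination (key12 w hw).2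
    rw [hBfw, Real.log_mul hmune (by exact mul_ne_zero two_ne_zero (mul_ne_zero hFFne hprod)),
      Real.log_mul two_ne_zero (mul_ne_zero hFFne hprod),
      Real.log_mul hFFne hprod, Real.log_mul h1pne h1mne]
    ring
  have lmu : lapR (fun w => Real.log (lam w ^ 2)) z₀ = 16 * lam z₀ ^ 2 := by
    rw [CurvAux.lapR_congr evdec,
      CurvAux.lapR_sub (by
        filter_upwards [sLogBf, sLogFF, sLog1p] with w h1 h2 h3
        exact ((h1.sub contDiffAt_const).sub h2).sub h3) sLog1m,
      CurvAux.lapR_sub (by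
        filter_upwards [sLogBf, sLogFF] with w h1 h2
        exact (h1.sub contDiffAt_const).sub h2) sLog1p,
      CurvAux.lapR_sub (by
        filter_upwards [sLogBf] with w h1
        exact h1.sub contDiffAt_const) sLogFF,
      CurvAux.lapR_sub sLogBf (Eventually.of_forall fun w => contDiffAt_const),
      lBlog, CurvAux.lapR_const, lFF, h₁ z₀ hz₀, h₂ z₀ hz₀]
    ring
  -- from log (lam^2) to log lam
  have evlog : (fun w => Real.log (lam w)) =ᶠ[𝓝 z₀]
      fun w => (1/2 : ℝ) * Real.log (lam w ^ 2) := by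
    apply Eventually.of_forall
    intro w
    show Real.log (lam w) = (1/2 : ℝ) * Real.log (lam w ^ 2)
    rw [Real.log_pow]
    push_cast
    ring
  have sLogMu : ∀ᶠ w in 𝓝 z₀, CurvAux.SM (fun y => Real.log (lam y ^ 2)) w := by
    filter_upwards [evU] with w hw
    exact (smu w hw).log (ne_of_gt (hmupos w hw))
  have llam : lapR (fun w => Real.log (lam w)) z₀ = 8 * lam z₀ ^ 2 := by
    rw [CurvAux.lapR_congr evlog, CurvAux.lapR_const_mul sLogMu (1/2), lmu]
    ring
  rw [hK z₀ hz₀, llam]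
  have hlamne : lam z₀ ≠ 0 := ne_of_gt (hlampos z₀ hz₀)
  field_simp


/-- If a smooth `F` with `|F| < 1` satisfies `Δ log(1+F) = −2λ²F` and
`Δ log(1−F) = 2λ²F` on an open set `U ⊆ ℂ` with `λ` smooth positive, then the Gaussian
curvature `K = −λ⁻²·Δ log λ` of the metric `λ²(dx²+dy²)` equals `−8` at every point
where `F ≠ 0` and `∇F ≠ 0`. -/
theorem curvature_eq_neg_eight_of_log_system
    (U : Set ℂ) (hU : IsOpen U)
    (F : ℂ → ℝ) (hF : ContDiffOn ℝ (⊤ : ℕ∞) F U) (hFlt : ∀ z ∈ U, |F z| < 1)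
    (lam : ℂ → ℝ) (hlam : ContDiffOn ℝ (⊤ : ℕ∞) lam U) (hlampos : ∀ z ∈ U, 0 < lam z)
    (h₁ : ∀ z ∈ U, lapR (fun w => Real.log (1 + F w)) z = -2 * (lam z) ^ 2 * F z)
    (h₂ : ∀ z ∈ U, lapR (fun w => Real.log (1 - F w)) z = 2 * (lam z) ^ 2 * F z)
    (K : ℂ → ℝ)
    (hK : ∀ z ∈ U, K z = -((lam z) ^ 2)⁻¹ * lapR (fun w => Real.log (lam w)) z) :
    ∀ z₀ ∈ U, F z₀ ≠ 0 → fderiv ℝ F z₀ ≠ 0 → K z₀ = -8 :=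
  curvature_aux U hU F hF hFlt lam hlam hlampos h₁ h₂ K hK
end

section
/- For any c, d ∈ ℂ, let γ : ℝ → ℝ² be γ(s) = (Re(c·exp(i·s)), Re(d·exp(i·s))), and let κ = sup_{s∈ℝ} ‖γ(s)‖ and μ = inf_{s∈ℝ} ‖γ(s)‖. Then κ·μ = |Im(c·conj(d))| and κ² + μ² = |c|² + |d|². -/
/-- The Euclidean norm `‖γ(s)‖` of the curvature-ellipse parametrization
`γ(s) = (Re(c·e^{is}), Re(d·e^{is}))` in `ℝ²`. -/
noncomputable def ellipseNorm (c d : ℂ) (s : ℝ) : ℝ :=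
  Real.sqrt ((c * Complex.exp (Complex.I * s)).re ^ 2 +
    (d * Complex.exp (Complex.I * s)).re ^ 2)

lemma sq_re_eq (z : ℂ) : z.re ^ 2 = (Complex.normSq z + (z ^ 2).re) / 2 := by
  rw [sq z, Complex.mul_re, Complex.normSq_apply]; ring

lemma normSq_exp_I_mul (s : ℝ) : Complex.normSq (Complex.exp (Complex.I * s)) = 1 := by
  rw [← Complex.sq_norm, mul_comm, Complex.norm_exp_ofReal_mul_I, one_pow]

lemma ellipseNorm_eq (c d : ℂ) (s : ℝ) :
    ellipseNorm c d s = Real.sqrt ((Complex.normSq c + Complex.normSq d +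
      ((c ^ 2 + d ^ 2) * Complex.exp (2 * Complex.I * s)).re) / 2) := by
  unfold ellipseNorm
  congr 1
  rw [sq_re_eq, sq_re_eq, Complex.normSq_mul, Complex.normSq_mul, normSq_exp_I_mul,
    mul_one, mul_one]
  have h2 : Complex.exp (Complex.I * s) ^ 2 = Complex.exp (2 * Complex.I * s) := by
    rw [← Complex.exp_nat_mul]; ring_nf
  rw [mul_pow, mul_pow, h2]
  have : ((c ^ 2 + d ^ 2) * Complex.exp (2 * Complex.I * s)).re
      = (c ^ 2 * Complex.exp (2 * Complex.I * s)).re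
        + (d ^ 2 * Complex.exp (2 * Complex.I * s)).re := by
    rw [add_mul, Complex.add_re]
  rw [this]; ring

/-- With `κ = sup_s ‖γ(s)‖` and `μ = inf_s ‖γ(s)‖` for
`γ(s) = (Re(c·e^{is}), Re(d·e^{is}))`, one has `κ·μ = |Im(c·conj d)|` and
`κ² + μ² = |c|² + |d|²`. -/
theorem ellipse_semiaxes_product_and_sum_sq (c d : ℂ)
    (κ μ : ℝ) (hκ : κ = ⨆ s : ℝ, ellipseNorm c d s) (hμ : μ = ⨅ s : ℝ, ellipseNorm c d s) :
    κ * μ = |(c * (starRingEnd ℂ) d).im| ∧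
    κ ^ 2 + μ ^ 2 = ‖c‖ ^ 2 + ‖d‖ ^ 2 := by
  set w : ℂ := c ^ 2 + d ^ 2 with hw
  set nc := Complex.normSq c
  set nd := Complex.normSq d
  set B := ‖w‖ with hB
  have habs : B ≤ nc + nd := by
    calc B ≤ ‖c ^ 2‖ + ‖d ^ 2‖ := norm_add_le _ _
    _ = nc + nd := by rw [norm_pow, norm_pow, Complex.sq_norm, Complex.sq_norm]
  have hB0 : (0:ℝ) ≤ B := norm_nonneg w
  have hnc0 : (0:ℝ) ≤ nc := Complex.normSq_nonneg c
  have hnd0 : (0:ℝ) ≤ nd := Complex.normSq_nonneg d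
  have hM0 : (0:ℝ) ≤ (nc + nd + B) / 2 := by linarith
  have hm0 : (0:ℝ) ≤ (nc + nd - B) / 2 := by linarith
  have habs_re : ∀ s : ℝ, |(w * Complex.exp (2 * Complex.I * s)).re| ≤ B := by
    intro s
    refine (Complex.abs_re_le_norm _).trans_eq ?_
    rw [norm_mul]
    have : ‖Complex.exp (2 * Complex.I * s)‖ = 1 := by
      have h : (2 : ℂ) * Complex.I * s = ((2 * s : ℝ) : ℂ) * Complex.I := by push_cast; ring
      rw [h, Complex.norm_exp_ofReal_mul_I]
    rw [this, mul_one]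
  have hub : ∀ s, ellipseNorm c d s ≤ Real.sqrt ((nc + nd + B) / 2) := by
    intro s
    rw [ellipseNorm_eq]
    apply Real.sqrt_le_sqrt
    have h1 := (le_abs_self _).trans (habs_re s)
    linarith
  have hlb : ∀ s, Real.sqrt ((nc + nd - B) / 2) ≤ ellipseNorm c d s := by
    intro s
    rw [ellipseNorm_eq]
    apply Real.sqrt_le_sqrt
    linarith [habs_re s, neg_abs_le ((w * Complex.exp (2 * Complex.I * s)).re)]
  have hsup_att : ∃ s, ellipseNorm c d s = Real.sqrt ((nc + nd + B) / 2) := by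
    refine ⟨-(Complex.arg w) / 2, ?_⟩
    have harg : w * Complex.exp (2 * Complex.I * (-(Complex.arg w) / 2 : ℝ)) = (B : ℂ) := by
      have h1 : (2 : ℂ) * Complex.I * ((-(Complex.arg w) / 2 : ℝ) : ℂ)
          = -(((Complex.arg w : ℝ)) * Complex.I) := by push_cast; ring
      rw [h1]
      nth_rewrite 1 [← Complex.norm_mul_exp_arg_mul_I w]
      rw [mul_assoc, ← Complex.exp_add, add_neg_cancel, Complex.exp_zero, mul_one]
    rw [ellipseNorm_eq, harg, Complex.ofReal_re]
  have hinf_att : ∃ s, ellipseNorm c d s = Real.sqrt ((nc + nd - B) / 2) := by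
    refine ⟨(Real.pi - Complex.arg w) / 2, ?_⟩
    have harg : w * Complex.exp (2 * Complex.I * ((Real.pi - Complex.arg w) / 2 : ℝ)) = (-B : ℂ) := by
      have h1 : (2 : ℂ) * Complex.I * (((Real.pi - Complex.arg w) / 2 : ℝ) : ℂ)
          = (Real.pi : ℂ) * Complex.I + -(((Complex.arg w : ℝ) : ℂ) * Complex.I) := by
        push_cast; ring
      rw [h1]
      nth_rewrite 1 [← Complex.norm_mul_exp_arg_mul_I w]
      rw [mul_assoc, ← Complex.exp_add]
      have h2 : ((Complex.arg w : ℝ) : ℂ) * Complex.I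
          + ((Real.pi : ℂ) * Complex.I + -(((Complex.arg w : ℝ) : ℂ) * Complex.I))
          = (Real.pi : ℂ) * Complex.I := by ring
      rw [h2, Complex.exp_pi_mul_I]
      push_cast
      ring
    rw [ellipseNorm_eq, harg]
    congr 1
  have hbdd : BddAbove (Set.range fun s => ellipseNorm c d s) := by
    refine ⟨Real.sqrt ((nc + nd + B) / 2), ?_⟩
    rintro x ⟨s, rfl⟩; exact hub s
  have hκ' : κ = Real.sqrt ((nc + nd + B) / 2) := by
    rw [hκ]
    apply le_antisymm (ciSup_le hub)
    obtain ⟨s, hs⟩ := hsup_att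
    exact hs ▸ le_ciSup hbdd s
  have hμ' : μ = Real.sqrt ((nc + nd - B) / 2) := by
    rw [hμ]
    refine le_antisymm ?_ (le_ciInf hlb)
    obtain ⟨s, hs⟩ := hinf_att
    exact hs ▸ ciInf_le ⟨Real.sqrt ((nc + nd - B) / 2), by rintro x ⟨t, rfl⟩; exact hlb t⟩ s
  have hident : (nc + nd) ^ 2 - Complex.normSq w = (2 * (c * (starRingEnd ℂ) d).im) ^ 2 := by
    simp only [hw, sq, Complex.normSq_apply, Complex.add_re, Complex.add_im, Complex.mul_im,
      Complex.mul_re, Complex.conj_re, Complex.conj_im, nc, nd]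
    ring
  constructor
  · rw [hκ', hμ', ← Real.sqrt_mul hM0]
    have hB2 : B ^ 2 = Complex.normSq w := Complex.sq_norm w
    have : (nc + nd + B) / 2 * ((nc + nd - B) / 2) = ((c * (starRingEnd ℂ) d).im) ^ 2 := by
      have : (nc + nd + B) / 2 * ((nc + nd - B) / 2) = ((nc + nd) ^ 2 - B ^ 2) / 4 := by ring
      rw [this, hB2, hident]; ring
    rw [this, Real.sqrt_sq_eq_abs]
  · rw [hκ', hμ', Real.sq_sqrt hM0, Real.sq_sqrt hm0, Complex.sq_norm, Complex.sq_norm]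
    ring
end
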